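/- arXiv:1911.02453 — 4 statements merged into one kernel-verified Lean document; each statement's English description precedes it below -/
import Mathlib

section
/- Let c be a metric (triangle-inequality-satisfying) nonnegative cost function on a finite set V with |V| ≥ 3, and let V' ⊆ V with |V'| ≥ 3. Then the minimum cost of a Hamiltonian cycle on V' (with respect to c) is at most the minimum cost of a Hamiltonian cycle on V. -/
/-!
Start a tour of `V` at a vertex of `V'` and skip the vertices outside `V'`: the result is a tour
of `V'`, and by the triangle inequality each shortcut `c u a + c a w ↦ c u w` does not increase
the cost.
-/

/-- Cost of traversing a list cyclically (wrapping around at the end). -/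
def cycleCost {V : Type*} (c : V → V → ℝ) (l : List V) : ℝ :=
  ∑ i : Fin l.length, c (l.get i) (l.get ⟨((i : ℕ) + 1) % l.length, Nat.mod_lt _ i.pos⟩)

/-- The set of costs of Hamiltonian cycles (tours) on a finset `S`. -/
def tourCosts {V : Type*} [DecidableEq V] (c : V → V → ℝ) (S : Finset V) : Set ℝ :=
  {x | ∃ l : List V, l.Nodup ∧ l.toFinset = S ∧ cycleCost c l = x}

section PathCost

variable {V : Type*} (c : V → V → ℝ)

def pathCost : List V → ℝ
  | [] => 0
  | [_] => 0
  | a :: b :: t => c a b + pathCost (b :: t)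

theorem pathCost_append_cons (a : V) (l₂ : List V) :
    ∀ l₁ : List V,
      pathCost c (l₁ ++ a :: l₂) = pathCost c (l₁ ++ [a]) + pathCost c (a :: l₂)
  | [] => by simp [pathCost]
  | [x] => by simp [pathCost]
  | x :: y :: l₁ => by
      simp only [List.cons_append, pathCost] at *
      rw [← List.cons_append, pathCost_append_cons a l₂ (y :: l₁), List.cons_append]
      ring

theorem pathCost_eq_sum_range (d : V) :
    ∀ l : List V,
      pathCost c l = ∑ i ∈ Finset.range (l.length - 1), c (l.getD i d) (l.getD (i + 1) d)
  | [] => by simp [pathCost]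
  | [a] => by simp [pathCost]
  | a :: b :: t => by
      rw [pathCost, pathCost_eq_sum_range d (b :: t)]
      simp only [List.length_cons, Nat.add_sub_cancel]
      rw [Finset.sum_range_succ']
      simp only [List.getD_cons_succ, List.getD_cons_zero]
      ring

variable {c}

theorem pathCost_cons_le (htri : ∀ u v w, c u w ≤ c u v + c v w) (u a : V) {r : List V}
    (hr : r ≠ []) : pathCost c (u :: r) ≤ c u a + pathCost c (a :: r) := by
  obtain ⟨w, r, rfl⟩ := List.exists_cons_of_ne_nil hr
  simp only [pathCost]
  linarith [htri u a w]

theorem pathCost_filter_le (htri : ∀ u v w, c u w ≤ c u v + c v w) (p : V → Bool) (v : V) :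
    ∀ (l : List V) (u : V), pathCost c (u :: l.filter p ++ [v]) ≤ pathCost c (u :: l ++ [v])
  | [], _ => le_rfl
  | a :: t, u => by
      have ih := pathCost_filter_le htri p v t a
      simp only [List.cons_append] at ih ⊢
      by_cases hp : p a
      · rw [List.filter_cons_of_pos hp, List.cons_append, pathCost]
        exact add_le_add_right ih (c u a)
      · rw [List.filter_cons_of_neg hp]
        calc pathCost c (u :: (t.filter p ++ [v]))
            ≤ c u a + pathCost c (a :: (t.filter p ++ [v])) :=
              pathCost_cons_le htri u a
                (List.append_ne_nil_of_right_ne_nil _ (List.cons_ne_nil v []))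
          _ ≤ c u a + pathCost c (a :: (t ++ [v])) := add_le_add_right ih (c u a)
          _ = pathCost c (u :: a :: (t ++ [v])) := rfl

end PathCost

section CycleCost

variable {V : Type*} (c : V → V → ℝ)

theorem cycleCost_cons (a : V) (t : List V) :
    cycleCost c (a :: t) = pathCost c (a :: t ++ [a]) := by
  set l := a :: t ++ [a]
  have hlen : l.length - 1 = (a :: t).length := by simp [l]
  rw [pathCost_eq_sum_range c a, hlen, cycleCost,
    ← Fin.sum_univ_eq_sum_range (fun j => c (l.getD j a) (l.getD (j + 1) a))]
  refine Finset.sum_congr rfl fun i _ => ?_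
  have hi : (i : ℕ) < l.length := by omega
  rw [List.get_eq_getElem, List.get_eq_getElem, List.getD_eq_getElem _ _ hi,
    List.getElem_append_left i.isLt]
  congr 1
  rcases Nat.lt_or_ge (i + 1) (a :: t).length with h | h
  · simp only [Nat.mod_eq_of_lt h]
    rw [List.getD_eq_getElem _ _ (by omega), List.getElem_append_left h]
  · have he : (i : ℕ) + 1 = (a :: t).length := by omega
    simp only [he, Nat.mod_self, List.getElem_cons_zero]
    rw [List.getD_eq_getElem _ _ (by omega), List.getElem_concat_length rfl]

theorem cycleCost_append_cons (v : V) (l₁ l₂ : List V) :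
    cycleCost c (l₁ ++ v :: l₂) = cycleCost c (v :: (l₂ ++ l₁)) := by
  cases l₁ with
  | nil => simp
  | cons x l₁ =>
      rw [List.cons_append, cycleCost_cons, cycleCost_cons,
        show x :: (l₁ ++ v :: l₂) ++ [x] = x :: l₁ ++ v :: (l₂ ++ [x]) by simp,
        show v :: (l₂ ++ x :: l₁) ++ [v] = v :: l₂ ++ x :: (l₁ ++ [v]) by simp,
        pathCost_append_cons c v _ (x :: l₁), pathCost_append_cons c x _ (v :: l₂)]
      simp only [List.cons_append]
      ring

variable {c}

theorem cycleCost_filter_le (htri : ∀ u v w, c u w ≤ c u v + c v w) {l : List V}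
    {p : V → Bool} (h : ∃ x ∈ l, p x) : cycleCost c (l.filter p) ≤ cycleCost c l := by
  obtain ⟨v, hv, hpv⟩ := h
  obtain ⟨l₁, l₂, rfl⟩ := List.append_of_mem hv
  rw [List.filter_append, List.filter_cons_of_pos hpv, cycleCost_append_cons,
    cycleCost_append_cons, ← List.filter_append, cycleCost_cons, cycleCost_cons]
  exact pathCost_filter_le htri p v _ v

end CycleCost

theorem tourCosts_finite {V : Type*} [DecidableEq V] (c : V → V → ℝ) (S : Finset V) :
    (tourCosts c S).Finite := by
  refine (S.toList.permutations.map (cycleCost c)).finite_toSet.subset ?_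
  rintro _ ⟨l, hnd, hl, rfl⟩
  refine List.mem_map_of_mem (List.mem_permutations.mpr ?_)
  exact List.perm_of_nodup_nodup_toFinset_eq hnd S.nodup_toList (by simp [hl])

theorem tourCosts_nonempty {V : Type*} [DecidableEq V] (c : V → V → ℝ) (S : Finset V) :
    (tourCosts c S).Nonempty :=
  ⟨_, S.toList, S.nodup_toList, S.toList_toFinset, rfl⟩

theorem stmt_1_general {V : Type*} [Fintype V] [DecidableEq V] (c : V → V → ℝ)
    (htri : ∀ u v w : V, c u w ≤ c u v + c v w)
    (V' : Finset V) (hV' : 3 ≤ V'.card) :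
    sInf (tourCosts c V') ≤ sInf (tourCosts c Finset.univ) := by
  obtain ⟨v, hv⟩ : V'.Nonempty := Finset.card_pos.mp (by omega)
  refine le_csInf (tourCosts_nonempty c _) ?_
  rintro _ ⟨l, hnd, hl, rfl⟩
  have hvl : v ∈ l := by simp [← List.mem_toFinset, hl]
  have hfilter : (l.filter (· ∈ V')).toFinset = V' := by
    ext x
    simp [hl]
  calc sInf (tourCosts c V') ≤ cycleCost c (l.filter (· ∈ V')) :=
        csInf_le (tourCosts_finite c V').bddBelow ⟨_, hnd.filter _, hfilter, rfl⟩
    _ ≤ cycleCost c l := cycleCost_filter_le htri ⟨v, hvl, by simpa using hv⟩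

/-- for a metric cost function, the minimum tour cost on a subset
`V'` (with `|V'| ≥ 3`, `|V| ≥ 3`) is at most the minimum tour cost on `V`. -/
theorem stmt_1 {V : Type*} [Fintype V] [DecidableEq V] (c : V → V → ℝ)
    (hnn : ∀ u v : V, 0 ≤ c u v)
    (htri : ∀ u v w : V, c u w ≤ c u v + c v w)
    (hV : 3 ≤ Fintype.card V)
    (V' : Finset V) (hV' : 3 ≤ V'.card) :
    sInf (tourCosts c V') ≤ sInf (tourCosts c Finset.univ) :=
  stmt_1_general c htri V' hV'
end

section
/- Every complete directed graph G with nonnegative cost function c is a minor (obtainable by edge contractions with min-cost merging) of some complete directed graph Ĝ whose cost function satisfies the triangle inequality. -/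
/-- every complete directed graph with nonnegative costs is a minor
(obtained by min-cost contractions, i.e. a partition with min cross-pair costs)
of some complete directed graph satisfying the triangle inequality. -/
theorem stmt_5 {V : Type*} [Fintype V] (c : V → V → ℝ)
    (hnn : ∀ u v : V, 0 ≤ c u v) :
    ∃ (W : Type) (_ : Fintype W) (chat : W → W → ℝ) (f : W → V),
      (∀ a b : W, 0 ≤ chat a b) ∧
      (∀ a b d : W, chat a d ≤ chat a b + chat b d) ∧
      Function.Surjective f ∧
      (∀ u v : V, u ≠ v →
        c u v = sInf {x | ∃ a b : W, f a = u ∧ f b = v ∧ chat a b = x}) := by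
  classical
  set n := Fintype.card V with hn
  set e := Fintype.equivFin V with he
  set g : Fin n → V := fun i => e.symm i with hg
  set M : ℝ := sSup (Set.range fun p : V × V => c p.1 p.2) with hM
  have hbdd : BddAbove (Set.range fun p : V × V => c p.1 p.2) :=
    (Set.finite_range _).bddAbove
  have hcM : ∀ u v : V, c u v ≤ M := fun u v => le_csSup hbdd ⟨(u, v), rfl⟩
  set chat : Fin n × Fin n → Fin n × Fin n → ℝ := fun a b =>
    if a = b then 0
    else if b.1 = a.2 ∧ b.2 = a.1 ∧ a.1 ≠ a.2 then c (g a.1) (g a.2)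
    else M + 1 with hchat
  have hMnn : ∀ _ : Fin n, 0 ≤ M := fun i => le_trans (hnn (g i) (g i)) (hcM _ _)
  have hnn' : ∀ a b : Fin n × Fin n, 0 ≤ chat a b := by
    intro a b
    simp only [hchat]
    split
    · exact le_refl 0
    split
    · exact hnn _ _
    · linarith [hMnn a.1]
  have hle : ∀ a b : Fin n × Fin n, chat a b ≤ M + 1 := by
    intro a b
    simp only [hchat]
    split
    · linarith [hMnn a.1]
    split
    · linarith [hcM (g a.1) (g a.2)]
    · exact le_refl _
  refine ⟨Fin n × Fin n, inferInstance, chat, fun p => g p.1, hnn', ?_, ?_, ?_⟩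
  · -- triangle
    intro a b d
    by_cases had : a = d
    · subst had
      have : chat a a = 0 := by simp [hchat]
      rw [this]; linarith [hnn' a b, hnn' b a]
    by_cases hab : a = b
    · subst hab
      have : chat a a = 0 := by simp [hchat]
      rw [this]; linarith
    by_cases hbd : b = d
    · subst hbd
      have : chat b b = 0 := by simp [hchat]
      rw [this]; linarith
    -- all distinct: at most one of the two edges is special
    have key : chat a b = M + 1 ∨ chat b d = M + 1 := by
      by_contra h
      push_neg at h
      obtain ⟨h1, h2⟩ := h
      have s1 : b.1 = a.2 ∧ b.2 = a.1 ∧ a.1 ≠ a.2 := by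
        by_contra hs
        simp only [hchat, if_neg hab, if_neg hs] at h1
        exact h1 rfl
      have s2 : d.1 = b.2 ∧ d.2 = b.1 ∧ b.1 ≠ b.2 := by
        by_contra hs
        simp only [hchat, if_neg hbd, if_neg hs] at h2
        exact h2 rfl
      apply had
      exact Prod.ext (s2.1.trans s1.2.1).symm (s2.2.1.trans s1.1).symm
    rcases key with h | h
    · calc chat a d ≤ M + 1 := hle a d
        _ ≤ chat a b + chat b d := by rw [h]; linarith [hnn' b d]
    · calc chat a d ≤ M + 1 := hle a d
        _ ≤ chat a b + chat b d := by rw [h]; linarith [hnn' a b]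
  · -- surjective
    intro u
    exact ⟨(e u, e u), e.symm_apply_apply u⟩
  · -- inf formula
    intro u v huv
    have hgeu : g (e u) = u := e.symm_apply_apply u
    have hgev : g (e v) = v := e.symm_apply_apply v
    have heuv : e u ≠ e v := fun h => huv (e.injective h)
    have hmem : c u v ∈ {x | ∃ a b : Fin n × Fin n, g a.1 = u ∧ g b.1 = v ∧ chat a b = x} := by
      refine ⟨(e u, e v), (e v, e u), hgeu, hgev, ?_⟩
      have hne : ((e u : Fin n), e v) ≠ (e v, e u) := by
        intro h
        exact heuv (congrArg Prod.fst h)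
      simp [hchat, hne, heuv, hgeu, hgev]
    have hlb : ∀ x ∈ {x | ∃ a b : Fin n × Fin n, g a.1 = u ∧ g b.1 = v ∧ chat a b = x},
        c u v ≤ x := by
      rintro x ⟨a, b, hau, hbv, rfl⟩
      have hab : a ≠ b := by
        intro h; subst h; exact huv (hau ▸ hbv)
      simp only [hchat, if_neg hab]
      split
      · rename_i hs
        have : g a.2 = v := by rw [hs.1] at hbv; exact hbv
        rw [hau, this]
      · linarith [hcM u v]
    show c u v = sInf {x | ∃ a b : Fin n × Fin n, g a.1 = u ∧ g b.1 = v ∧ chat a b = x}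
    exact (le_antisymm (le_csInf ⟨_, hmem⟩ hlb) (csInf_le ⟨0, fun x hx => le_trans (hnn u v) (hlb x hx)⟩ hmem))
end

section
/- Let c be a cost function on V satisfying the triangle inequality and satisfying the β-symmetry condition c(u,v) ≤ β·c(v,u) for all u,v. Define the symmetrized cost c_<(u,v) = min(c(u,v), c(v,u)). For any closed walk W on V, the cheaper of the two traversal directions of W under c has cost at most (1+β)/2 times the c_<-cost of W. -/
/-- for a β-symmetric metric cost function, the cheaper traversal
direction of any closed walk costs at most `(1+β)/2` times its symmetrized cost. -/
theorem stmt_14 {V : Type*} (c : V → V → ℝ) (β : ℝ) (hβ : 1 ≤ β)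
    (hnn : ∀ u v : V, 0 ≤ c u v)
    (htri : ∀ u v w : V, c u w ≤ c u v + c v w)
    (hβsym : ∀ u v : V, c u v ≤ β * c v u)
    (l : List V) :
    min (cycleCost c l) (cycleCost (fun u v => c v u) l)
      ≤ (1 + β) / 2 * cycleCost (fun u v => min (c u v) (c v u)) l := by
  have key : ∀ u v : V, c u v + c v u ≤ (1 + β) * min (c u v) (c v u) := by
    intro u v
    rcases le_total (c u v) (c v u) with h | h
    · rw [min_eq_left h]
      have := hβsym v u
      nlinarith
    · rw [min_eq_right h]
      have := hβsym u v
      nlinarith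
  have hsum : cycleCost c l + cycleCost (fun u v => c v u) l
      ≤ (1 + β) * cycleCost (fun u v => min (c u v) (c v u)) l := by
    unfold cycleCost
    rw [← Finset.sum_add_distrib, Finset.mul_sum]
    exact Finset.sum_le_sum fun i _ => by
      simpa using key _ _
  have hmin : min (cycleCost c l) (cycleCost (fun u v => c v u) l)
      ≤ (cycleCost c l + cycleCost (fun u v => c v u) l) / 2 := by
    rcases le_total (cycleCost c l) (cycleCost (fun u v => c v u) l) with h | h
    · rw [min_eq_left h]; linarith
    · rw [min_eq_right h]; linarith
  linarith
end

section
/- Let c be a metric cost function on a finite set V of even cardinality at least 2. Then the minimum-cost perfect matching on V (where matching edge {u,v} costs min(c(u,v), c(v,u))) has cost at most half the minimum tour cost c^*(V). -/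
namespace Stmt15

def s1 (i : ℕ) : ℕ := if i % 2 = 0 then i + 1 else i - 1
def s2 (n i : ℕ) : ℕ := if i % 2 = 1 then (i + 1) % n else if i = 0 then n - 1 else i - 1

lemma s1_lt {n i : ℕ} (hn : n % 2 = 0) (hi : i < n) : s1 i < n := by
  unfold s1; split <;> omega

lemma s1_s1 {i : ℕ} : s1 (s1 i) = i := by
  unfold s1; rcases Nat.even_or_odd i with h | h <;>
    [skip; skip] <;> simp [Nat.even_iff, Nat.odd_iff] at h <;> split <;> split <;> omega

lemma s1_ne (i : ℕ) : s1 i ≠ i := by unfold s1; split <;> omega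

lemma s1_parity (i : ℕ) : s1 i % 2 ≠ i % 2 := by unfold s1; split <;> omega

lemma s1_even {i : ℕ} (h : i % 2 = 0) : s1 i = i + 1 := by simp [s1, h]

lemma s2_lt {n i : ℕ} (hn2 : 2 ≤ n) (hi : i < n) : s2 n i < n := by
  unfold s2; split
  · exact Nat.mod_lt _ (by omega)
  · split <;> omega

lemma s2_s2 {n i : ℕ} (hn : n % 2 = 0) (hn2 : 2 ≤ n) (hi : i < n) : s2 n (s2 n i) = i := by
  rcases Nat.lt_or_ge (i+1) n with h | h
  · by_cases hp : i % 2 = 1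
    · have h1 : s2 n i = i + 1 := by
        simp only [s2, if_pos hp]; exact Nat.mod_eq_of_lt h
      rw [h1]; simp only [s2]
      rw [if_neg (by omega : ¬ ((i+1) % 2 = 1)), if_neg (by omega : ¬ (i + 1 = 0))]; omega
    · by_cases h0 : i = 0
      · have h1 : s2 n i = n - 1 := by simp only [s2, if_neg hp, if_pos h0]
        rw [h1]; simp only [s2]
        rw [if_pos (by omega : (n-1) % 2 = 1), (by omega : n - 1 + 1 = n), Nat.mod_self, h0]
      · have h1 : s2 n i = i - 1 := by simp only [s2, if_neg hp, if_neg h0]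
        rw [h1]; simp only [s2]
        rw [if_pos (by omega : (i-1) % 2 = 1), (by omega : i - 1 + 1 = i)]
        exact Nat.mod_eq_of_lt hi
  · have hp : i % 2 = 1 := by omega
    have h1 : s2 n i = 0 := by
      simp only [s2, if_pos hp, (by omega : i + 1 = n)]; exact Nat.mod_self n
    rw [h1]; simp only [s2]
    rw [if_neg (by omega : ¬ ((0:ℕ) % 2 = 1))]; simp; omega

lemma s2_ne {n : ℕ} (hn : n % 2 = 0) (hn2 : 2 ≤ n) {i : ℕ} (hi : i < n) : s2 n i ≠ i := by
  unfold s2; split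
  · rcases Nat.lt_or_ge (i+1) n with h | h
    · rw [Nat.mod_eq_of_lt h]; omega
    · have : i + 1 = n := by omega
      rw [this, Nat.mod_self]; omega
  · split <;> omega

lemma s2_parity {n : ℕ} (hn : n % 2 = 0) (hn2 : 2 ≤ n) {i : ℕ} (hi : i < n) :
    s2 n i % 2 ≠ i % 2 := by
  unfold s2; split
  · rcases Nat.lt_or_ge (i+1) n with h | h
    · rw [Nat.mod_eq_of_lt h]; omega
    · rw [(by omega : i + 1 = n), Nat.mod_self]; omega
  · split <;> omega

lemma s2_odd {n i : ℕ} (h : i % 2 = 1) : s2 n i = (i + 1) % n := by simp [s2, h]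

variable {V : Type*} [Fintype V] [DecidableEq V]

lemma matching_mem (c : V → V → ℝ) (l : List V) (hnd : l.Nodup) (hSl : l.toFinset = Finset.univ)
    (σ : ℕ → ℕ) (hlt : ∀ i, i < l.length → σ i < l.length)
    (hinv : ∀ i, i < l.length → σ (σ i) = i) (hne : ∀ i, i < l.length → σ i ≠ i) :
    ∃ f : V ≃ V, (∀ a, f (f a) = a) ∧ (∀ a, f a ≠ a) ∧
      ∑ a : V, min (c a (f a)) (c (f a) a)
        = ∑ i : Fin l.length,
            min (c (l.get i) (l.get ⟨σ i.1, hlt _ i.2⟩)) (c (l.get ⟨σ i.1, hlt _ i.2⟩) (l.get i)) := by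
  have hinj : Function.Injective l.get := List.nodup_iff_injective_get.mp hnd
  have hcard : Fintype.card (Fin l.length) = Fintype.card V := by
    rw [Fintype.card_fin, ← Finset.card_univ, ← hSl, List.toFinset_card_of_nodup hnd]
  have hbij : Function.Bijective l.get := (Fintype.bijective_iff_injective_and_card _).mpr ⟨hinj, hcard⟩
  let e : Fin l.length ≃ V := Equiv.ofBijective _ hbij
  let σf : Fin l.length → Fin l.length := fun i => ⟨σ i.1, hlt _ i.2⟩
  have hσinv : Function.Involutive σf := fun i => Fin.ext (hinv i.1 i.2)
  have ginv : Function.Involutive (fun a => e (σf (e.symm a))) := by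
    intro a; simp [hσinv (e.symm a)]
  have hee : ∀ i, e i = l.get i := fun i => rfl
  refine ⟨ginv.toPerm _, fun a => ginv a, ?_, ?_⟩
  · intro a hfa
    simp only [Function.Involutive.coe_toPerm] at hfa
    have h2 : σf (e.symm a) = e.symm a := by
      have := congrArg e.symm hfa
      simpa using this
    exact hne (e.symm a).1 (e.symm a).2 (congrArg Fin.val h2)
  · rw [← Equiv.sum_comp e (fun a => min (c a _) (c _ a))]
    refine Finset.sum_congr rfl fun i _ => ?_
    have : (Function.Involutive.toPerm _ ginv) (e i) = e (σf i) := by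
      simp only [Function.Involutive.coe_toPerm, Equiv.symm_apply_apply]
    rw [this, hee, hee]

lemma double_sum {n : ℕ} (t : Fin n → ℝ) (σf : Fin n → Fin n)
    (hinv : Function.Involutive σf) (p : Fin n → Prop) [DecidablePred p]
    (hflip : ∀ i, p (σf i) ↔ ¬ p i) (hsym : ∀ i, t (σf i) = t i) :
    ∑ i, t i = 2 * ∑ i ∈ Finset.univ.filter p, t i := by
  rw [← Finset.sum_filter_add_sum_filter_not Finset.univ p t]
  have : ∑ i ∈ Finset.univ.filter (fun i => ¬ p i), t i
      = ∑ i ∈ Finset.univ.filter p, t i := by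
    refine Finset.sum_nbij' (fun i => σf i) (fun i => σf i) ?_ ?_ ?_ ?_ ?_
    · intro a ha
      simp only [Finset.mem_filter, Finset.mem_univ, true_and] at ha ⊢
      exact (hflip a).mpr ha
    · intro a ha
      simp only [Finset.mem_filter, Finset.mem_univ, true_and] at ha ⊢
      intro hc
      exact ((hflip a).mp hc) ha
    · intro a _; exact hinv a
    · intro a _; exact hinv a
    · intro a _; exact (hsym a).symm
  rw [this]; ring

end Stmt15

open Stmt15

/-- on an even vertex set of a metric instance, the minimum-cost
perfect matching (edge `{u,v}` costing `min(c(u,v), c(v,u))`) costs at most half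
the minimum tour cost. Perfect matchings are modeled as fixed-point-free
involutions; each matching edge is counted twice in the sum, hence the `/ 2`. -/
theorem stmt_15 {V : Type*} [Fintype V] [DecidableEq V] (c : V → V → ℝ)
    (hnn : ∀ u v : V, 0 ≤ c u v)
    (htri : ∀ u v w : V, c u w ≤ c u v + c v w)
    (heven : Even (Fintype.card V)) (hcard : 2 ≤ Fintype.card V) :
    sInf {x | ∃ f : V ≃ V, (∀ a, f (f a) = a) ∧ (∀ a, f a ≠ a) ∧
        (∑ a : V, min (c a (f a)) (c (f a) a)) / 2 = x}
      ≤ sInf (tourCosts c Finset.univ) / 2 := by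
  set M := {x | ∃ f : V ≃ V, (∀ a, f (f a) = a) ∧ (∀ a, f a ≠ a) ∧
      (∑ a : V, min (c a (f a)) (c (f a) a)) / 2 = x} with hM
  have hMbdd : BddBelow M := by
    refine ⟨0, fun x hx => ?_⟩
    obtain ⟨f, -, -, hx⟩ := hx
    rw [← hx]
    have : 0 ≤ ∑ a : V, min (c a (f a)) (c (f a) a) :=
      Finset.sum_nonneg fun a _ => le_min (hnn _ _) (hnn _ _)
    linarith
  have hTne : (tourCosts c (Finset.univ : Finset V)).Nonempty := by
    exact ⟨cycleCost c Finset.univ.toList,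
      Finset.univ.toList, Finset.nodup_toList _, Finset.toList_toFinset _, rfl⟩
  -- key: for every tour cost x, 2 * sInf M ≤ x
  have key : ∀ x ∈ tourCosts c (Finset.univ : Finset V), 2 * sInf M ≤ x := by
    rintro x ⟨l, hnd, hSl, rfl⟩
    have hlen : l.length = Fintype.card V := by
      rw [← Finset.card_univ, ← hSl, List.toFinset_card_of_nodup hnd]
    have hn2 : 2 ≤ l.length := hlen ▸ hcard
    have hnev : l.length % 2 = 0 := by
      rw [hlen]; exact Nat.even_iff.mp heven
    -- matching 1 (pairs (0,1),(2,3),...)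
    obtain ⟨f1, hf1a, hf1b, hf1s⟩ := matching_mem c l hnd hSl s1
      (fun i hi => s1_lt hnev hi) (fun i hi => s1_s1) (fun i hi => s1_ne i)
    -- matching 2 (pairs (1,2),(3,4),...,(n-1,0))
    obtain ⟨f2, hf2a, hf2b, hf2s⟩ := matching_mem c l hnd hSl (s2 l.length)
      (fun i hi => s2_lt hn2 hi) (fun i hi => s2_s2 hnev hn2 hi)
      (fun i hi => s2_ne hnev hn2 hi)
    have hm1 : sInf M ≤ (∑ a : V, min (c a (f1 a)) (c (f1 a) a)) / 2 :=
      csInf_le hMbdd ⟨f1, hf1a, hf1b, rfl⟩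
    have hm2 : sInf M ≤ (∑ a : V, min (c a (f2 a)) (c (f2 a) a)) / 2 :=
      csInf_le hMbdd ⟨f2, hf2a, hf2b, rfl⟩
    -- bound the two index sums
    set n := l.length with hnn'
    let E : Finset (Fin n) := Finset.univ.filter (fun i => i.1 % 2 = 0)
    let O : Finset (Fin n) := Finset.univ.filter (fun i => i.1 % 2 = 1)
    let ec : Fin n → ℝ := fun i => c (l.get i) (l.get ⟨(i.1 + 1) % n, Nat.mod_lt _ i.pos⟩)
    have hsplit : ∑ i ∈ E, ec i + ∑ i ∈ O, ec i = cycleCost c l := by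
      rw [cycleCost, ← Finset.sum_filter_add_sum_filter_not Finset.univ (fun i : Fin n => i.1 % 2 = 0) ec]
      congr 1
      apply Finset.sum_congr _ (fun _ _ => rfl)
      apply Finset.filter_congr
      intro i _
      constructor <;> intro h <;> omega
    -- sum 1
    have hb1 : ∑ i : Fin n, min (c (l.get i) (l.get ⟨s1 i.1, s1_lt hnev i.2⟩))
        (c (l.get ⟨s1 i.1, s1_lt hnev i.2⟩) (l.get i)) ≤ 2 * ∑ i ∈ E, ec i := by
      rw [double_sum _ (fun i : Fin n => (⟨s1 i.1, s1_lt hnev i.2⟩ : Fin n))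
        (fun i => Fin.ext (s1_s1)) (fun i => i.1 % 2 = 0)
        (fun i => by
          have := s1_parity i.1
          show s1 i.1 % 2 = 0 ↔ ¬ i.1 % 2 = 0
          constructor <;> intro h <;> omega)
        (fun i => by
          have h2 : ((⟨s1 (s1 i.1), s1_lt hnev (s1_lt hnev i.2)⟩ : Fin n)) = i :=
            Fin.ext s1_s1
          simp only [h2]
          exact min_comm _ _)]
      have : ∀ i ∈ E, min (c (l.get i) (l.get ⟨s1 i.1, s1_lt hnev i.2⟩))
          (c (l.get ⟨s1 i.1, s1_lt hnev i.2⟩) (l.get i)) ≤ ec i := by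
        intro i hi
        simp only [E, Finset.mem_filter] at hi
        have hlt1 : i.1 + 1 < n := by
          have := s1_lt hnev i.2
          rwa [s1_even hi.2] at this
        have hv : s1 i.1 = (i.1 + 1) % n := by
          rw [s1_even hi.2, Nat.mod_eq_of_lt hlt1]
        have hg : (⟨s1 i.1, s1_lt hnev i.2⟩ : Fin n) = ⟨(i.1 + 1) % n, Nat.mod_lt _ i.pos⟩ :=
          Fin.ext hv
        rw [hg]
        exact min_le_left _ _
      linarith [Finset.sum_le_sum this]
    -- sum 2
    have hb2 : ∑ i : Fin n, min (c (l.get i) (l.get ⟨s2 n i.1, s2_lt hn2 i.2⟩))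
        (c (l.get ⟨s2 n i.1, s2_lt hn2 i.2⟩) (l.get i)) ≤ 2 * ∑ i ∈ O, ec i := by
      rw [double_sum _ (fun i : Fin n => (⟨s2 n i.1, s2_lt hn2 i.2⟩ : Fin n))
        (fun i => Fin.ext (s2_s2 hnev hn2 i.2)) (fun i => i.1 % 2 = 1)
        (fun i => by
          have := s2_parity hnev hn2 i.2
          show s2 n i.1 % 2 = 1 ↔ ¬ i.1 % 2 = 1
          constructor <;> intro h <;> omega)
        (fun i => by
          have h2 : ((⟨s2 n (s2 n i.1), s2_lt hn2 (s2_lt hn2 i.2)⟩ : Fin n)) = i :=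
            Fin.ext (s2_s2 hnev hn2 i.2)
          simp only [h2]
          exact min_comm _ _)]
      have : ∀ i ∈ O, min (c (l.get i) (l.get ⟨s2 n i.1, s2_lt hn2 i.2⟩))
          (c (l.get ⟨s2 n i.1, s2_lt hn2 i.2⟩) (l.get i)) ≤ ec i := by
        intro i hi
        simp only [O, Finset.mem_filter] at hi
        have hg : (⟨s2 n i.1, s2_lt hn2 i.2⟩ : Fin n) = ⟨(i.1 + 1) % n, Nat.mod_lt _ i.pos⟩ :=
          Fin.ext (s2_odd hi.2)
        rw [hg]
        exact min_le_left _ _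
      linarith [Finset.sum_le_sum this]
    rw [hf1s] at hm1
    rw [hf2s] at hm2
    linarith
  have h2 : 2 * sInf M ≤ sInf (tourCosts c (Finset.univ : Finset V)) :=
    le_csInf hTne key
  linarith
end
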